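/- arXiv:1411.5557 — 4 statements merged into one kernel-verified Lean document; each statement's English description precedes it below -/
import Mathlib

section
/- Let C be a poset. If for every infinite sequence (x_i)_{i∈ℕ} in C there exist i < j with x_j ≤ x_i, then every strictly ascending chain of sieves in C is finite; equivalently, there is no strictly increasing sequence of sieves (D_n)_{n∈ℕ} in C. -/
open Set

namespace LowerSet

variable {α : Type*} [Preorder α]

/-- Picking `x n ∈ D (n + 1) \ D n` gives a bad sequence: `x j ≤ x i` would put `x j` in the lower
set `D (i + 1) ≤ D j`. -/
theorem not_wellQuasiOrdered_ge_of_strictMono {D : ℕ → LowerSet α} (hD : StrictMono D) :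
    ¬ WellQuasiOrdered (α := α) (· ≥ ·) := by
  have hnew : ∀ n, ∃ x ∈ D (n + 1), x ∉ D n := fun n =>
    exists_of_ssubset (coe_ssubset_coe.2 (hD n.lt_succ_self))
  choose x hx_mem hx_not_mem using hnew
  intro hwqo
  obtain ⟨i, j, hij, hle⟩ := hwqo x
  exact hx_not_mem j (hD.monotone hij ((D (i + 1)).lower hle (hx_mem i)))

theorem wellFoundedGT_of_wellQuasiOrdered_ge (h : WellQuasiOrdered (α := α) (· ≥ ·)) :
    WellFoundedGT (LowerSet α) :=
  ⟨RelEmbedding.wellFounded_iff_isEmpty.2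
    ⟨fun f => not_wellQuasiOrdered_ge_of_strictMono (fun _ _ hmn => f.map_rel_iff.2 hmn) h⟩⟩

end LowerSet

/-- If for every infinite sequence `(x i)` in a poset `C` there are `i < j` with
`x j ≤ x i`, then there is no strictly increasing sequence of sieves (lower sets)
in `C`. -/
theorem no_strict_chain_of_sieves {C : Type*} [PartialOrder C]
    (h : ∀ x : ℕ → C, ∃ i j, i < j ∧ x j ≤ x i) :
    ¬ ∃ D : ℕ → LowerSet C, ∀ n, D n < D (n + 1) := by
  rintro ⟨D, hD⟩
  have := LowerSet.wellFoundedGT_of_wellQuasiOrdered_ge h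
  exact not_strictMono_of_wellFoundedGT D (strictMono_nat_of_lt_succ hD)
end

section
/- Let C be an essentially small category and x ∈ C. The functor C(-,x) : C^op → Set is noetherian (every ascending chain of subfunctors stabilises) if and only if the poset C̄(x) is strongly noetherian. -/
open CategoryTheory CategoryTheory.Limits Opposite

universe v

variable {C : Type v} [SmallCategory C]

/-- The disjoint union `C(x) = ⨆ₜ C(t, x)` of all hom-sets into `x`. -/
def HomOver (x : C) : Type v := Σ t : C, t ⟶ x

/-- `⟨f⟩`: the set of morphisms in `C(x)` factoring through `f`. -/
def factorSet {x : C} (f : HomOver x) : Set (HomOver x) :=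
  {g | ∃ e : g.1 ⟶ f.1, g.2 = e ≫ f.2}

/-- The preorder on `C(x)`: `f ≤ g` iff `⟨f⟩ ⊆ ⟨g⟩`. -/
instance homOverPreorder (x : C) : Preorder (HomOver x) where
  le f g := factorSet f ⊆ factorSet g
  le_refl _ := subset_rfl
  le_trans _ _ _ h h' := Set.Subset.trans h h'

/-- The poset `C̄(x)`, obtained from the preorder on `C(x)` by identifying `f` and `g`
whenever `⟨f⟩ = ⟨g⟩`. -/
def HomPoset (x : C) := Antisymmetrization (HomOver x) (· ≤ ·)

instance (x : C) : PartialOrder (HomPoset x) :=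
  instPartialOrderAntisymmetrization

/-! A subfunctor of `C(-, x)` is a family of sets of morphisms into `x` closed under
precomposition, which is exactly a lower set of the preorder `C(x)`; and a lower set of a
preorder is the same as a lower set of its antisymmetrization `C̄(x)`. Hence the subobjects of
`C(-, x)` and the sieves of `C̄(x)` form isomorphic posets, and the ascending chain condition
passes along order isomorphisms. -/

lemma HomOver.le_iff {x : C} {f g : HomOver x} :
    f ≤ g ↔ ∃ e : f.1 ⟶ g.1, f.2 = e ≫ g.2 := by
  refine ⟨fun h => h ⟨𝟙 f.1, (Category.id_comp _).symm⟩, ?_⟩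
  rintro ⟨e, he⟩ h ⟨e', he'⟩
  exact ⟨e' ≫ e, by rw [he', he, Category.assoc]⟩

noncomputable def LowerSet.antisymmetrizationOrderIso (α : Type*) [Preorder α] :
    LowerSet α ≃o LowerSet (Antisymmetrization α (· ≤ ·)) :=
  Equiv.toOrderIso
    { toFun D := ⟨ofAntisymmetrization (· ≤ ·) ⁻¹' D, fun _ _ hba ha =>
        D.lower (ofAntisymmetrization_le_ofAntisymmetrization_iff.mpr hba) ha⟩
      invFun E := ⟨toAntisymmetrization (· ≤ ·) ⁻¹' E,
        fun _ _ hba ha => E.lower (toAntisymmetrization_mono hba) ha⟩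
      left_inv D := by
        ext a
        have h := toAntisymmetrization_ofAntisymmetrization (· ≤ ·) (toAntisymmetrization _ a)
        exact ⟨D.lower h.ge, D.lower h.le⟩
      right_inv E := by
        ext a
        exact iff_of_eq (congrArg (· ∈ E) (toAntisymmetrization_ofAntisymmetrization _ a)) }
    (fun _ _ h _ ha => h ha) (fun _ _ h _ ha => h ha)

def Subfunctor.yonedaOrderIsoLowerSet (x : C) :
    Subfunctor (yoneda.obj x) ≃o LowerSet (HomOver x) :=
  Equiv.toOrderIso
    { toFun P := ⟨{f | f.2 ∈ P.obj (op f.1)}, fun g f hgf hf => by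
        obtain ⟨e, he⟩ := HomOver.le_iff.mp hgf
        simpa [he] using P.map e.op hf⟩
      invFun D :=
        { obj t := {f | (⟨t.unop, f⟩ : HomOver x) ∈ D}
          map i f hf := D.lower (HomOver.le_iff.mpr ⟨i.unop, rfl⟩) hf }
      left_inv P := rfl
      right_inv D := rfl }
    (fun _ _ h f hf => h _ hf) (fun _ _ h t f hf => h hf)

lemma OrderIso.monotone_chain_condition {α β : Type*} [Preorder α] [Preorder β] (e : α ≃o β)
    (h : ∀ f : ℕ →o α, ∃ n, ∀ m, n ≤ m → f m = f n) (g : ℕ →o β) :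
    ∃ n, ∀ m, n ≤ m → g m = g n := by
  obtain ⟨n, hn⟩ := h ((e.symm : β →o α).comp g)
  exact ⟨n, fun m hm => e.symm.injective (hn m hm)⟩

/-- The representable functor `C(-, x) : Cᵒᵖ → Set` is noetherian (every ascending
chain of subfunctors stabilises) iff the poset `C̄(x)` is strongly noetherian (every
ascending chain of sieves, i.e. lower sets, stabilises). -/
theorem yoneda_noetherian_iff (x : C) :
    (∀ f : ℕ →o Subobject (yoneda.obj x), ∃ n, ∀ m, n ≤ m → f m = f n) ↔
      (∀ D : ℕ →o LowerSet (HomPoset x), ∃ n, ∀ m, n ≤ m → D m = D n) := by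
  let e : Subobject (yoneda.obj x) ≃o LowerSet (HomPoset x) :=
    (Subfunctor.orderIsoSubobject _).symm.trans
      ((Subfunctor.yonedaOrderIsoLowerSet x).trans (LowerSet.antisymmetrizationOrderIso _))
  exact ⟨e.monotone_chain_condition, e.symm.monotone_chain_condition⟩
end

section
/- Let φ : C → D be a contravariantly finite functor between essentially small categories, A a Grothendieck abelian category, and M ∈ A. If M[C(-,x)] is a noetherian object of Fun(C^op, A) for every x ∈ C, then M[D(-,y)] is a noetherian object of Fun(D^op, A) for every y ∈ D. -/
open CategoryTheory CategoryTheory.Limits Opposite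

universe v u

/-- `F ⇝ G`: the functors `F, G : Cᵒᵖ → Set` are connected by a finite chain of
epimorphisms `Fᵢ ↠ Fᵢ₊₁` and monomorphisms `Fᵢ₊₁ ↣ Fᵢ`. -/
inductive Leadsto {C : Type v} [SmallCategory C] :
    (Cᵒᵖ ⥤ Type v) → (Cᵒᵖ ⥤ Type v) → Prop
  | refl (F : Cᵒᵖ ⥤ Type v) : Leadsto F F
  | epi {F G H : Cᵒᵖ ⥤ Type v} (f : F ⟶ G) : Epi f → Leadsto G H → Leadsto F H
  | mono {F G H : Cᵒᵖ ⥤ Type v} (f : G ⟶ F) : Mono f → Leadsto G H → Leadsto F H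

/-- A functor `φ : C → D` is contravariantly finite if every object of `D` is
isomorphic to some `φ x`, and for every `y ∈ D` there are `x₁, …, xₙ ∈ C` with
`⨆ᵢ C(-, xᵢ) ⇝ D(φ-, y)`. -/
def ContravariantlyFinite {C D : Type v} [SmallCategory C] [SmallCategory D]
    (φ : C ⥤ D) : Prop :=
  (∀ y : D, ∃ x : C, Nonempty (φ.obj x ≅ y)) ∧
    ∀ y : D, ∃ (n : ℕ) (xs : Fin n → C),
      Leadsto (∐ fun i : Fin n => yoneda.obj (xs i)) (φ.op ⋙ yoneda.obj y)

variable {C D : Type v} [SmallCategory C] [SmallCategory D]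
  {A : Type u} [Category.{v} A]

/-- `M[C(-,x)]`: the functor sending `t` to the coproduct of copies of `M` indexed by
the hom-set `C(t, x)`. -/
@[simps]
noncomputable def freeFunctor [HasCoproducts.{v} A] (M : A) (x : C) : Cᵒᵖ ⥤ A where
  obj t := ∐ (fun _ : t.unop ⟶ x => M)
  map {t t'} e := Sigma.desc fun f => Sigma.ι (fun _ : t'.unop ⟶ x => M) (e.unop ≫ f)
  map_id t := by ext f; simp
  map_comp {t t' t''} e e' := by ext f; simp

/-- An object is noetherian if its subobjects satisfy the ascending chain condition. -/
def IsNoetherianObject {B : Type*} [Category B] (N : B) : Prop :=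
  ∀ f : ℕ →o Subobject N, ∃ n, ∀ m, n ≤ m → f m = f n

/-!
Noetherian objects of an abelian category form a Serre class, hence are closed under finite
coproducts; for extensions, two nested subobjects of `X₂` with the same pullback to `X₁` and the
same image in `X₃` coincide, so an ascending chain in `X₂` stabilises with those in `X₁` and `X₃`.
The functor `F ↦ M[F]` preserves epimorphisms, monomorphisms and coproducts (it is
`F ↦ F ⋙ sigmaConst.obj M`, and `sigmaConst.obj M` is a left adjoint preserving monomorphisms).
So `M[⨆ᵢ C(-, xᵢ)] ≅ ⨆ᵢ M[C(-, xᵢ)]` is noetherian, and following the zigzag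
`⨆ᵢ C(-, xᵢ) ⇝ D(φ-, y)` so is `M[D(φ-, y)] = φ* M[D(-, y)]`. Finally, restriction along an
essentially surjective `φ` is faithful, so it reflects the ascending chain condition.
-/

lemma isNoetherianObject_iff_wellFoundedGT {B : Type*} [Category B] (X : B) :
    _root_.IsNoetherianObject X ↔ WellFoundedGT (Subobject X) := by
  rw [wellFoundedGT_iff_monotone_chain_condition]
  exact forall_congr' fun f => exists_congr fun n => forall₂_congr fun m _ => eq_comm

lemma Leadsto.prop_map {B : Type*} [Category B] {P : ObjectProperty B}
    [P.IsClosedUnderSubobjects] [P.IsClosedUnderQuotients]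
    (L : (Cᵒᵖ ⥤ Type v) ⥤ B) [L.PreservesEpimorphisms] [L.PreservesMonomorphisms]
    {F G : Cᵒᵖ ⥤ Type v} (h : Leadsto F G) (hF : P (L.obj F)) : P (L.obj G) := by
  induction h with
  | refl => exact hF
  | epi f _ _ ih => exact ih (P.prop_of_epi (L.map f) hF)
  | mono f _ _ ih => exact ih (P.prop_of_mono (L.map f) hF)

namespace CategoryTheory

section Noetherian

lemma isNoetherianObject_of_strictMono {B : Type*} [Category B] {X : B} {β : Type*}
    [Preorder β] [WellFoundedGT β] (g : Subobject X → β) (hg : StrictMono g) :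
    isNoetherianObject X :=
  hg.wellFoundedGT

variable {B : Type*} [Category B] [Abelian B]

lemma Subobject.factors_iff_comp_cokernel_π_eq_zero {X Y : B} (P : Subobject Y) (a : X ⟶ Y) :
    P.Factors a ↔ a ≫ cokernel.π P.arrow = 0 := by
  refine ⟨fun h => ?_, fun h => ?_⟩
  · rw [← P.factorThru_arrow a h, Category.assoc, cokernel.condition, comp_zero]
  · rw [← Abelian.monoLift_comp P.arrow a h]
    exact Subobject.factors_comp_arrow _

lemma Subobject.le_of_pullback_le_pullback {X Y : B} (p : X ⟶ Y) [Epi p] {S T : Subobject Y}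
    (h : (Subobject.pullback p).obj S ≤ (Subobject.pullback p).obj T) : S ≤ T := by
  have hS : ((Subobject.pullback p).obj S).Factors (pullback.snd S.arrow p) :=
    (pullback_factors_iff p S _).2 (by
      rw [← pullback.condition]
      exact Subobject.factors_comp_arrow _)
  have hT : T.Factors (pullback.snd S.arrow p ≫ p) :=
    (pullback_factors_iff p T _).1 (Subobject.factors_of_le _ h hS)
  refine Subobject.le_of_factors ((Subobject.factors_iff_comp_cokernel_π_eq_zero _ _).2 ?_)
  rw [Subobject.factors_iff_comp_cokernel_π_eq_zero, Category.assoc,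
    ← pullback.condition_assoc] at hT
  exact (cancel_epi (pullback.fst S.arrow p)).1 (by rw [hT, comp_zero])

lemma Subobject.le_of_map_le_map {B' : Type*} [Category B'] [HasZeroMorphisms B'] (F : B ⥤ B')
    [F.Faithful] [F.PreservesMonomorphisms] [F.PreservesZeroMorphisms] {X : B} {S T : Subobject X}
    (h : Subobject.mk (F.map S.arrow) ≤ Subobject.mk (F.map T.arrow)) : S ≤ T := by
  refine Subobject.le_of_factors ((Subobject.factors_iff_comp_cokernel_π_eq_zero _ _).2 ?_)
  refine F.map_injective ?_
  rw [F.map_comp, ← Subobject.ofMkLEMk_comp h, Category.assoc, ← F.map_comp,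
    cokernel.condition, F.map_zero, F.map_zero, comp_zero]

lemma ShortComplex.Exact.subobject_le_of_pullback_le_of_imageSubobject_le {S : ShortComplex B}
    (hS : S.Exact) {P Q : Subobject S.X₂} (hPQ : P ≤ Q)
    (h₁ : (Subobject.pullback S.f).obj Q ≤ (Subobject.pullback S.f).obj P)
    (h₃ : imageSubobject (Q.arrow ≫ S.g) ≤ imageSubobject (P.arrow ≫ S.g)) : Q ≤ P := by
  obtain ⟨A, π, _, a, hπ⟩ := surjective_up_to_refinements_of_epi
    (factorThruImageSubobject (P.arrow ≫ S.g))
    (factorThruImageSubobject (Q.arrow ≫ S.g) ≫ Subobject.ofLE _ _ h₃)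
  have hg : (π ≫ Q.arrow - a ≫ P.arrow) ≫ S.g = 0 := by
    have := hπ =≫ (imageSubobject (P.arrow ≫ S.g)).arrow
    simp only [Category.assoc, Subobject.ofLE_arrow, imageSubobject_arrow_comp] at this
    rw [Preadditive.sub_comp, Category.assoc, Category.assoc, this, sub_self]
  obtain ⟨A', π', _, x, hx⟩ := hS.exact_up_to_refinements _ hg
  have hxQ : Q.Factors (x ≫ S.f) := by
    rw [Subobject.factors_iff_comp_cokernel_π_eq_zero, ← hx, Preadditive.comp_sub,
      Preadditive.sub_comp, ← Subobject.ofLE_arrow hPQ]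
    simp only [Category.assoc, cokernel.condition, comp_zero, sub_self]
  have hxP : P.Factors (x ≫ S.f) := (pullback_factors_iff _ _ _).1
    (Subobject.factors_of_le _ h₁ ((pullback_factors_iff _ _ _).2 hxQ))
  rw [Subobject.factors_iff_comp_cokernel_π_eq_zero] at hxP
  have hQ : π' ≫ π ≫ Q.arrow = x ≫ S.f + π' ≫ a ≫ P.arrow := by
    rw [← hx, Preadditive.comp_sub]
    abel
  refine Subobject.le_of_factors ((Subobject.factors_iff_comp_cokernel_π_eq_zero _ _).2 ?_)
  refine (cancel_epi (π' ≫ π)).1 ?_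
  simp [reassoc_of% hQ, hxP]

instance : (isNoetherianObject (C := B)).IsClosedUnderQuotients where
  prop_of_epi p _ hX := by
    have : WellFoundedGT _ := hX
    exact isNoetherianObject_of_strictMono _ (OrderEmbedding.ofMapLEIff _ fun _ _ =>
      ⟨Subobject.le_of_pullback_le_pullback p, fun h => (Subobject.pullback p).monotone h⟩
      ).strictMono

instance : (isNoetherianObject (C := B)).IsClosedUnderExtensions where
  prop_X₂_of_shortExact {S} hS h₁ h₃ := by
    have : WellFoundedGT _ := h₁
    have : WellFoundedGT _ := h₃
    refine isNoetherianObject_of_strictMono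
      (fun P => ((Subobject.pullback S.f).obj P, imageSubobject (P.arrow ≫ S.g))) ?_
    refine fun P Q hPQ => lt_of_le_of_ne ⟨(Subobject.pullback S.f).monotone hPQ.le, ?_⟩ ?_
    · dsimp only
      rw [← Subobject.ofLE_arrow hPQ.le, Category.assoc]
      exact imageSubobject_comp_le _ _
    · intro h
      exact hPQ.not_ge (hS.exact.subobject_le_of_pullback_le_of_imageSubobject_le hPQ.le
        (Prod.ext_iff.1 h).1.ge (Prod.ext_iff.1 h).2.ge)

instance : (isNoetherianObject (C := B)).IsSerreClass where

instance ObjectProperty.isClosedUnderBinaryCoproducts_of_isClosedUnderExtensions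
    (P : ObjectProperty B) [P.IsClosedUnderIsomorphisms] [P.IsClosedUnderExtensions] :
    P.IsClosedUnderBinaryCoproducts :=
  ObjectProperty.IsClosedUnderColimitsOfShape.mk' (by
    rintro _ ⟨F, hF⟩
    exact P.prop_of_iso
      (HasColimit.isoOfNatIso (diagramIsoPair F) ≪≫ (biprod.isoCoprod _ _).symm).symm
      (P.prop_biprod (hF _) (hF _)))

instance ObjectProperty.isClosedUnderFiniteCoproducts_of_isSerreClass
    (P : ObjectProperty B) [P.IsSerreClass] : P.IsClosedUnderFiniteCoproducts :=
  .mk'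

lemma isNoetherianObject_of_faithful {B' : Type*} [Category B'] [HasZeroMorphisms B']
    (F : B ⥤ B') [F.Faithful] [F.PreservesMonomorphisms] [F.PreservesZeroMorphisms] {X : B}
    (h : isNoetherianObject (F.obj X)) : isNoetherianObject X := by
  have : WellFoundedGT _ := h
  refine isNoetherianObject_of_strictMono _ (OrderEmbedding.ofMapLEIff
    (fun S : Subobject X => Subobject.mk (F.map S.arrow)) fun S T =>
      ⟨Subobject.le_of_map_le_map F, fun hST => ?_⟩).strictMono
  exact Subobject.mk_le_mk_of_comm (F.map (Subobject.ofLE S T hST))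
    (by rw [← F.map_comp, Subobject.ofLE_arrow])

end Noetherian

instance Functor.faithful_whiskeringLeft_obj_of_essSurj {C D : Type*} [Category C] [Category D]
    (L : C ⥤ D) [L.EssSurj] (E : Type*) [Category E] :
    ((Functor.whiskeringLeft C D E).obj L).Faithful where
  map_injective {F G α β} h := by
    ext d
    rw [← cancel_epi (F.map (L.objObjPreimageIso d).hom), α.naturality, β.naturality]
    exact congr_arg (· ≫ G.map _) (NatTrans.congr_app h _)

/-- `M[F]`: the presheaf `t ↦ ∐_{F t} M`. -/
noncomputable abbrev sigmaConstPresheaf [HasCoproducts.{v} A] (M : A) :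
    (Cᵒᵖ ⥤ Type v) ⥤ (Cᵒᵖ ⥤ A) :=
  (Functor.whiskeringRight Cᵒᵖ (Type v) A).obj (sigmaConst.obj M)

noncomputable def freeFunctorIso [HasCoproducts.{v} A] (M : A) (x : C) :
    freeFunctor M x ≅ (sigmaConstPresheaf M).obj (yoneda.obj x) :=
  NatIso.ofComponents (fun _ => Iso.refl _) fun _ => by
    refine (Category.comp_id _).trans ((Category.id_comp _).trans ?_).symm
    dsimp [Sigma.map']
    simp only [Category.id_comp]
    rfl

end CategoryTheory

theorem freeFunctor_noetherian_of_contravariantlyFinite_general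
    [Abelian A] [HasColimits A]
    (φ : C ⥤ D) (hφ : ContravariantlyFinite φ) (M : A)
    (h : ∀ x : C, _root_.IsNoetherianObject (freeFunctor M x)) :
    ∀ y : D, _root_.IsNoetherianObject (freeFunctor M y) := by
  intro y
  simp only [isNoetherianObject_iff_wellFoundedGT] at h ⊢
  obtain ⟨n, xs, hxs⟩ := hφ.2 y
  have : φ.EssSurj := ⟨hφ.1⟩
  have hcoprod : isNoetherianObject ((sigmaConstPresheaf M).obj (∐ fun i => yoneda.obj (xs i))) :=
    isNoetherianObject.prop_of_iso (PreservesCoproduct.iso _ _).symm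
      (isNoetherianObject.prop_coproduct fun i => isNoetherianObject.prop_of_iso
        (freeFunctorIso M (xs i)) (h (xs i)))
  have hrestr : isNoetherianObject (φ.op ⋙ freeFunctor M y) :=
    isNoetherianObject.prop_of_iso (Functor.isoWhiskerLeft φ.op (freeFunctorIso M y)).symm
      (hxs.prop_map _ hcoprod)
  exact isNoetherianObject_of_faithful ((Functor.whiskeringLeft Cᵒᵖ Dᵒᵖ A).obj φ.op) hrestr

/-- Base change along a contravariantly finite functor `φ : C → D`: if `M[C(-,x)]` is
noetherian in `Fun(Cᵒᵖ, A)` for every `x ∈ C`, then `M[D(-,y)]` is noetherian in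
`Fun(Dᵒᵖ, A)` for every `y ∈ D`. -/
theorem freeFunctor_noetherian_of_contravariantlyFinite
    [Abelian A] [HasColimits A] [AB5 A] [HasSeparator A]
    (φ : C ⥤ D) (hφ : ContravariantlyFinite φ) (M : A)
    (h : ∀ x : C, _root_.IsNoetherianObject (freeFunctor M x)) :
    ∀ y : D, _root_.IsNoetherianObject (freeFunctor M y) :=
  freeFunctor_noetherian_of_contravariantlyFinite_general φ hφ M h
end

section
/- Fix n ≥ 0 and let Γ(n) be the set of all functions f : {1,...,m} → {1,...,n} over all m ≥ 0, ordered by f ≤ g iff f = g∘h for some ordered surjection h. Then for every infinite sequence (f_r)_{r∈ℕ} in Γ(n) there exist indices i < j with f_j ≤ f_i (i.e., (Γ(n), ≤) is a well-quasi-order / strongly noetherian poset). -/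
/-- `minFib f i` is `min f⁻¹(i)` (as a natural number) for `f : Fin m → Fin n`. -/
noncomputable def minFib {m n : ℕ} (f : Fin m → Fin n) (i : Fin n) : ℕ :=
  sInf {a : ℕ | ∃ h : a < m, f ⟨a, h⟩ = i}

/-- A map `f : Fin m → Fin n` is an ordered surjection if it is surjective and
`i < j` implies `min f⁻¹(i) < min f⁻¹(j)`. -/
def IsOrderedSurj {m n : ℕ} (f : Fin m → Fin n) : Prop :=
  Function.Surjective f ∧ StrictMono fun i => minFib f i

/-- The order on `Γ(n) = ⨆ₘ Γ(m, n)`: `f ≤ g` iff `f = g ∘ h` for some ordered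
surjection `h`. -/
def leGamma {n : ℕ} (f g : Σ m : ℕ, Fin m → Fin n) : Prop :=
  ∃ h : Fin f.1 → Fin g.1, IsOrderedSurj h ∧ f.2 = g.2 ∘ h

/-!
Tag every letter of a word with the set of letters occurring strictly before it. By Higman's
lemma over the finite alphabet `Fin n × Set (Fin n)`, together with pigeonhole on the set of
letters, some `f_i` has the same letters as a later `f_j` and its tagged word is a subword of the
tagged word of `f_j`. Matching tags force the first occurrence of each letter of `f_i` onto a
first occurrence in `f_j`, so every letter of `f_j` already appears at or before it at a matched
position. Sending each position of `f_j` to the last such matched position with the same letter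
is then an ordered surjection exhibiting `f_j ≤ f_i`.
-/

theorem List.wellQuasiOrdered_sublist {α : Type*} [Finite α] :
    WellQuasiOrdered (@List.Sublist α) := by
  have higman := (Set.partiallyWellOrderedOn_univ_iff.2
    (Finite.wellQuasiOrdered (α := α) (· = ·))).partiallyWellOrderedOn_sublistForall₂ (· = ·)
  intro w
  obtain ⟨i, j, hij, hw⟩ := higman.exists_lt (f := w) fun _ _ _ => Set.mem_univ _
  obtain ⟨l, hl, hsub⟩ := List.sublistForall₂_iff.1 hw
  rw [List.forall₂_eq_eq_eq] at hl
  exact ⟨i, j, hij, hl ▸ hsub⟩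

theorem List.exists_orderEmbedding_of_ofFn_sublist {α : Type*} {m m' : ℕ}
    {u : Fin m' → α} {v : Fin m → α} (h : (List.ofFn u).Sublist (List.ofFn v)) :
    ∃ e : Fin m' ↪o Fin m, ∀ k, u k = v (e k) := by
  obtain ⟨e, he⟩ := List.sublist_iff_exists_fin_orderEmbedding_get_eq.1 h
  refine ⟨((Fin.castOrderIso (List.length_ofFn)).symm.toOrderEmbedding.trans e).trans
    (Fin.castOrderIso (List.length_ofFn)).toOrderEmbedding, fun k => ?_⟩
  have hk := he (Fin.cast List.length_ofFn.symm k)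
  simp only [List.get_ofFn] at hk
  exact hk

theorem minFib_eq_of_isLeast {m n : ℕ} {h : Fin m → Fin n} {i : Fin n} {x : Fin m}
    (hx : h x = i) (hmin : ∀ a, h a = i → x ≤ a) : minFib h i = x := by
  refine le_antisymm (Nat.sInf_le ⟨x.2, hx⟩) (le_csInf ⟨x, x.2, hx⟩ ?_)
  rintro b ⟨hb, hbi⟩
  exact hmin ⟨b, hb⟩ hbi

section OrderedSurj

variable {n m m' : ℕ} {f : Fin m → Fin n} {g : Fin m' → Fin n}

theorem leGamma_of_orderEmbedding (e : Fin m' ↪o Fin m) (he : ∀ k, g k = f (e k))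
    (hcover : ∀ a, ∃ k, e k ≤ a ∧ g k = f a) : leGamma ⟨m, f⟩ ⟨m', g⟩ := by
  have hlast : ∀ a, ∃ k, (e k ≤ a ∧ g k = f a) ∧ ∀ k', e k' ≤ a ∧ g k' = f a → k' ≤ k := by
    intro a
    obtain ⟨k, hk, hmax⟩ := wellFounded_gt.has_min {k | e k ≤ a ∧ g k = f a} (hcover a)
    exact ⟨k, hk, fun k' hk' => not_lt.1 (hmax k' hk')⟩
  choose h hh hmax using hlast
  have h_e : ∀ k, h (e k) = k := fun k =>
    le_antisymm (e.le_iff_le.1 (hh (e k)).1) (hmax _ k ⟨le_rfl, he k⟩)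
  have minFib_h : ∀ k, minFib h k = e k := fun k =>
    minFib_eq_of_isLeast (h_e k) fun a hak => hak ▸ (hh a).1
  refine ⟨h, ⟨fun k => ⟨e k, h_e k⟩, fun k l hkl => ?_⟩, funext fun a => (hh a).2.symm⟩
  simp only [minFib_h, Fin.val_fin_lt]
  exact e.strictMono hkl

def tagPrefixLetters {α : Type*} {m : ℕ} (w : Fin m → α) : List (α × Set α) :=
  List.ofFn fun a => (w a, w '' Set.Iio a)

theorem leGamma_of_tagPrefixLetters_sublist (hrange : Set.range g = Set.range f)
    (hsub : (tagPrefixLetters g).Sublist (tagPrefixLetters f)) : leGamma ⟨m, f⟩ ⟨m', g⟩ := by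
  obtain ⟨e, he⟩ := List.exists_orderEmbedding_of_ofFn_sublist hsub
  simp only [Prod.ext_iff] at he
  refine leGamma_of_orderEmbedding e (fun k => (he k).1) fun a => ?_
  obtain ⟨k₀, hk₀, hfirst⟩ := wellFounded_lt.has_min {k | g k = f a}
    (show f a ∈ Set.range g from hrange ▸ Set.mem_range_self a)
  refine ⟨k₀, not_lt.1 fun hlt => ?_, hk₀⟩
  have hnew : f a ∉ g '' Set.Iio k₀ := fun ⟨k, hk, hgk⟩ => hfirst k hgk hk
  exact hnew ((he k₀).2 ▸ ⟨a, hlt, rfl⟩)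

end OrderedSurj

/-- Higman-type lemma: `(Γ(n), ≤)` is strongly noetherian (a well-quasi-order): every
infinite sequence `(f_r)` in `Γ(n)` has indices `i < j` with `f_j ≤ f_i`. -/
theorem gamma_wqo (n : ℕ) (f : ℕ → Σ m : ℕ, Fin m → Fin n) :
    ∃ i j, i < j ∧ leGamma (f j) (f i) := by
  obtain ⟨i, j, hij, hrange, hsub⟩ :=
    ((Finite.wellQuasiOrdered (α := Set (Fin n)) (· = ·)).prod List.wellQuasiOrdered_sublist)
      fun r => (Set.range (f r).2, tagPrefixLetters (f r).2)
  exact ⟨i, j, hij, leGamma_of_tagPrefixLetters_sublist hrange hsub⟩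
end
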